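/- (Theorem on informativity for closed-loop stability.) Under the stated assumptions, the data are informative for closed-loop stability with respect to K if and only if there exist a radially unbounded V ∈ 𝒱 and a function β : ℝⁿ → ℝ such that for all x ∈ ℝⁿ \ {0}: β(x) > 0 and the symmetric (1+ℓ)×(1+ℓ) matrix [[−L_s̄ᵀ(x) N₂₂⁻¹ N₂₁ + L_sᵀ(x) v_s − β(x), (N|N₂₂)^(1/2) L_s̄ᵀ(x)],[(N|N₂₂)^(1/2) L_s̄(x), (L_s̄ᵀ(x) N₂₂⁻¹ N₂₁ − L_sᵀ(x) v_s) N₂₂]] is positive semidefinite, where L_s(x) and L_s̄(x) denote the subvectors of L(x) with entries indexed by s and s̄, respectively. -/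

import Mathlib

open Matrix Kronecker MvPolynomial Filter

noncomputable section

/-- Index type for the stacked parameter vector `v = [vec(Aᵀ); vec(Bᵀ)] ∈ ℝ^(n(f+g))`:
`inl (i, a)` indexes the entry `A i a` and `inr (i, b)` the entry `B i b`. -/
abbrev ParamIdx (n f g : ℕ) := (Fin n × Fin f) ⊕ (Fin n × Fin g)

/-- The parameter vector `v = [vec(Aᵀ); vec(Bᵀ)]` of a system `(A, B)`. -/
def paramVec {n f g : ℕ} (A : Matrix (Fin n) (Fin f) ℝ) (B : Matrix (Fin n) (Fin g) ℝ) :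
    ParamIdx n f g → ℝ :=
  Sum.elim (fun p => A p.1 p.2) (fun p => B p.1 p.2)

/-- The data matrix `D = [Iₙ ⊗ 𝓕 ; Iₙ ⊗ 𝓗] ∈ ℝ^(n(f+g) × nT)`. -/
def Dmat {n f g T : ℕ} (F : Matrix (Fin f) (Fin T) ℝ) (H : Matrix (Fin g) (Fin T) ℝ) :
    Matrix (ParamIdx n f g) (Fin n × Fin T) ℝ :=
  Matrix.fromRows ((1 : Matrix (Fin n) (Fin n) ℝ) ⊗ₖ F)
    ((1 : Matrix (Fin n) (Fin n) ℝ) ⊗ₖ H)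

/-- The set `Σ` of systems `(A, B)` compatible with the data `(Ẋ, 𝓕, 𝓗)`, the noise
bound `‖vec(Wᵀ)‖² ≤ Φ₁₁`, and the prior knowledge that the entries of `v` indexed by
`s` equal `vs`. -/
def SigmaSet {n f g T : ℕ} (Xd : Matrix (Fin n) (Fin T) ℝ) (F : Matrix (Fin f) (Fin T) ℝ)
    (H : Matrix (Fin g) (Fin T) ℝ) (Φ11 : ℝ) (s : Finset (ParamIdx n f g))
    (vs : {i // i ∈ s} → ℝ) :
    Set (Matrix (Fin n) (Fin f) ℝ × Matrix (Fin n) (Fin g) ℝ) :=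
  {AB | (∀ i : {i // i ∈ s}, paramVec AB.1 AB.2 i.1 = vs i) ∧
    ∃ W : Matrix (Fin n) (Fin T) ℝ,
      (∑ i, ∑ t, W i t ^ 2) ≤ Φ11 ∧ Xd = AB.1 * F + AB.2 * H + W}

/-- The matrix `M = [[1, 0], [vec(Ẋᵀ) − D_{s•}ᵀ v_s, −D_{s̄•}ᵀ]]`. -/
def Mmat {n f g T : ℕ} (Xd : Matrix (Fin n) (Fin T) ℝ) (F : Matrix (Fin f) (Fin T) ℝ)
    (H : Matrix (Fin g) (Fin T) ℝ) (s : Finset (ParamIdx n f g))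
    (vs : {i // i ∈ s} → ℝ) :
    Matrix (Unit ⊕ (Fin n × Fin T)) (Unit ⊕ {i // i ∈ sᶜ}) ℝ :=
  Matrix.fromBlocks (Matrix.of fun _ _ => 1) 0
    (Matrix.of fun p _ =>
      Xd p.1 p.2 -
        (((Dmat F H).submatrix (fun i : {i // i ∈ s} => i.1) id)ᵀ *ᵥ vs) p)
    (-((Dmat F H).submatrix (fun i : {i // i ∈ sᶜ} => i.1) id)ᵀ)

/-- The matrix `diag(Φ₁₁, −I_{nT})`. -/
def PhiMat {n T : ℕ} (Φ11 : ℝ) :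
    Matrix (Unit ⊕ (Fin n × Fin T)) (Unit ⊕ (Fin n × Fin T)) ℝ :=
  Matrix.fromBlocks (Matrix.of fun _ _ => Φ11) 0 0 (-1)

/-- The data-based matrix `N = Mᵀ diag(Φ₁₁, −I_{nT}) M ∈ 𝕊^(1+ℓ)`. -/
def Nmat {n f g T : ℕ} (Xd : Matrix (Fin n) (Fin T) ℝ) (F : Matrix (Fin f) (Fin T) ℝ)
    (H : Matrix (Fin g) (Fin T) ℝ) (Φ11 : ℝ) (s : Finset (ParamIdx n f g))
    (vs : {i // i ∈ s} → ℝ) :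
    Matrix (Unit ⊕ {i // i ∈ sᶜ}) (Unit ⊕ {i // i ∈ sᶜ}) ℝ :=
  (Mmat Xd F H s vs)ᵀ * PhiMat (n := n) (T := T) Φ11 * Mmat Xd F H s vs

/-- The symmetric block matrix `[[c, lᵀ], [l, M]]` over an index type `Unit ⊕ κ`. -/
def bmatI {κ : Type} (c : ℝ) (l : κ → ℝ) (M : Matrix κ κ ℝ) :
    Matrix (Unit ⊕ κ) (Unit ⊕ κ) ℝ :=
  Matrix.fromBlocks (Matrix.of fun _ _ => c) (Matrix.of fun _ j => l j)
    (Matrix.of fun i _ => l i) M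

/-- Evaluation of the gradient (`i`-th partial derivative) of a polynomial `V` at `x`. -/
def gradEval {n : ℕ} (V : MvPolynomial (Fin n) ℝ) (x : Fin n → ℝ) (i : Fin n) : ℝ :=
  eval x (pderiv i V)

/-- `V ∈ 𝒱` (`V(0) = 0`, `V(x) > 0` for `x ≠ 0`) and `V` is radially unbounded. -/
def IsLyapCandidate {n : ℕ} (V : MvPolynomial (Fin n) ℝ) : Prop :=
  eval (0 : Fin n → ℝ) V = 0 ∧ (∀ x : Fin n → ℝ, x ≠ 0 → 0 < eval x V) ∧
    Tendsto (fun x : Fin n → ℝ => eval x V) (cocompact _) atTop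

/-- The vector `L(x) = [−Iₙ ⊗ F(x); −Iₙ ⊗ (G(x)K(x))] (∂V/∂x)ᵀ(x) ∈ ℝ^(n(f+g))`, so
that `L(x)ᵀ v = −(∂V/∂x)(x)(A F(x) + B G(x)K(x))`. -/
def Lvec {n m f g : ℕ} (Fp : Fin f → MvPolynomial (Fin n) ℝ)
    (Gp : Fin g → Fin m → MvPolynomial (Fin n) ℝ) (K : (Fin n → ℝ) → Fin m → ℝ)
    (V : MvPolynomial (Fin n) ℝ) (x : Fin n → ℝ) : ParamIdx n f g → ℝ :=
  Sum.elim (fun p => -(eval x (Fp p.2)) * gradEval V x p.1)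
    (fun p => -(∑ j, eval x (Gp p.2 j) * K x j) * gradEval V x p.1)

/-- The data are informative for closed-loop stability with respect to `K`: there is a
radially unbounded `V ∈ 𝒱` with `(∂V/∂x)(x)(A F(x) + B G(x)K(x)) < 0` for all `x ≠ 0`
and all `(A, B) ∈ Σ`. -/
def InformativeCL {n m f g T : ℕ} (Xd : Matrix (Fin n) (Fin T) ℝ)
    (Fd : Matrix (Fin f) (Fin T) ℝ) (Hd : Matrix (Fin g) (Fin T) ℝ) (Φ11 : ℝ)
    (s : Finset (ParamIdx n f g)) (vs : {i // i ∈ s} → ℝ)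
    (Fp : Fin f → MvPolynomial (Fin n) ℝ) (Gp : Fin g → Fin m → MvPolynomial (Fin n) ℝ)
    (K : (Fin n → ℝ) → Fin m → ℝ) : Prop :=
  ∃ V : MvPolynomial (Fin n) ℝ, IsLyapCandidate V ∧
    ∀ x : Fin n → ℝ, x ≠ 0 → ∀ AB ∈ SigmaSet Xd Fd Hd Φ11 s vs,
      (∑ i, gradEval V x i *
        ((∑ a, AB.1 i a * eval x (Fp a)) +
          ∑ b, AB.2 i b * ∑ j, eval x (Gp b j) * K x j)) < 0

section Aux
variable {κ : Type} [Fintype κ] [DecidableEq κ]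

lemma herm_transpose {Q : Matrix κ κ ℝ} (h : Q.IsHermitian) : Qᵀ = Q := by
  ext i j
  conv_rhs => rw [← h]
  simp [Matrix.conjTranspose_apply, Matrix.transpose_apply]

lemma dot_symm (Q : Matrix κ κ ℝ) (hQ : Qᵀ = Q) (a y : κ → ℝ) :
    a ⬝ᵥ Q *ᵥ y = y ⬝ᵥ Q *ᵥ a := by
  rw [Matrix.dotProduct_mulVec, ← Matrix.mulVec_transpose, hQ, dotProduct_comm]

lemma psd_quad (Q : Matrix κ κ ℝ) (hQ : Q.PosSemidef) (x : κ → ℝ) :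
    0 ≤ x ⬝ᵥ Q *ᵥ x := by
  have := hQ.dotProduct_mulVec_nonneg x
  simpa using this

lemma cs_ineq (Q : Matrix κ κ ℝ) (hQ : Q.PosSemidef) (a y : κ → ℝ) :
    (a ⬝ᵥ Q *ᵥ y) ^ 2 ≤ (a ⬝ᵥ Q *ᵥ a) * (y ⬝ᵥ Q *ᵥ y) := by
  have hsym := dot_symm Q (herm_transpose hQ.1)
  have key : ∀ t : ℝ, 0 ≤ (a ⬝ᵥ Q *ᵥ a) * (t * t) + (2 * (a ⬝ᵥ Q *ᵥ y)) * t + y ⬝ᵥ Q *ᵥ y := by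
    intro t
    have h0 := psd_quad Q hQ (t • a + y)
    have hexp : (t • a + y) ⬝ᵥ Q *ᵥ (t • a + y)
        = (a ⬝ᵥ Q *ᵥ a) * (t * t) + (2 * (a ⬝ᵥ Q *ᵥ y)) * t + y ⬝ᵥ Q *ᵥ y := by
      rw [Matrix.mulVec_add, Matrix.mulVec_smul, add_dotProduct, smul_dotProduct,
        dotProduct_add, dotProduct_add, dotProduct_smul,
        dotProduct_smul, hsym y a]
      simp only [smul_eq_mul]; ring
    rw [hexp] at h0; exact h0
  have hd := discrim_le_zero key
  unfold discrim at hd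
  nlinarith [hd]

lemma ellipsoid_iff (Q : Matrix κ κ ℝ) (hQ : Q.PosDef) (L : κ → ℝ) (r γ : ℝ) (hr : 0 ≤ r) :
    (∀ u : κ → ℝ, u ⬝ᵥ Q *ᵥ u ≤ r → 0 < γ + L ⬝ᵥ u) ↔
      Real.sqrt (r * (L ⬝ᵥ Q⁻¹ *ᵥ L)) < γ := by
  have hQi : Q⁻¹.PosDef := hQ.inv
  set a : κ → ℝ := Q⁻¹ *ᵥ L with ha
  have hQa : Q *ᵥ a = L := by
    rw [ha, Matrix.mulVec_mulVec, Matrix.mul_nonsing_inv _ hQ.det_pos.ne'.isUnit,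
      Matrix.one_mulVec]
  set p := L ⬝ᵥ Q⁻¹ *ᵥ L with hpdef
  have hp0 : 0 ≤ p := psd_quad _ hQi.posSemidef L
  have hLa : L ⬝ᵥ a = p := rfl
  have haQa : a ⬝ᵥ Q *ᵥ a = p := by rw [hQa]; rw [dotProduct_comm]
  have haQu : ∀ u, a ⬝ᵥ Q *ᵥ u = L ⬝ᵥ u := by
    intro u
    rw [dot_symm Q (herm_transpose hQ.1), hQa, dotProduct_comm]
  constructor
  · intro h
    rcases eq_or_lt_of_le hp0 with hp | hp
    · have h0 := h 0 (by simpa using hr)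
      simpa [← hp] using h0
    · set t := Real.sqrt (r / p) with htdef
      have ht : 0 ≤ t := Real.sqrt_nonneg _
      have ht2 : t ^ 2 = r / p := Real.sq_sqrt (div_nonneg hr hp.le)
      have h1 : ((-t) • a) ⬝ᵥ Q *ᵥ ((-t) • a) ≤ r := by
        rw [Matrix.mulVec_smul, smul_dotProduct, dotProduct_smul, haQa,
          smul_eq_mul, smul_eq_mul]
        have : -t * (-t * p) = t ^ 2 * p := by ring
        rw [this, ht2]
        rw [div_mul_cancel₀ _ hp.ne']
      have h2 := h ((-t) • a) h1
      rw [dotProduct_smul, hLa, smul_eq_mul] at h2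
      have h3 : t * p = Real.sqrt (r * p) := by
        rw [← Real.sqrt_sq hp.le, htdef, ← Real.sqrt_mul (div_nonneg hr hp.le)]
        congr 1
        field_simp
        rw [Real.sqrt_sq hp.le]
      nlinarith [h2, h3]
  · intro h u hu
    have hq0 : 0 ≤ u ⬝ᵥ Q *ᵥ u := psd_quad _ hQ.posSemidef u
    have hcs : (L ⬝ᵥ u) ^ 2 ≤ p * r := by
      have hc := cs_ineq Q hQ.posSemidef a u
      rw [haQu, haQa] at hc
      calc (L ⬝ᵥ u) ^ 2 ≤ p * (u ⬝ᵥ Q *ᵥ u) := hc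
        _ ≤ p * r := by nlinarith
    have hle : -(L ⬝ᵥ u) ≤ Real.sqrt (r * p) := by
      have h1 : -(L ⬝ᵥ u) ≤ |L ⬝ᵥ u| := neg_le_abs _
      have h2 : |L ⬝ᵥ u| = Real.sqrt ((L ⬝ᵥ u) ^ 2) := (Real.sqrt_sq_eq_abs _).symm
      have h3 : Real.sqrt ((L ⬝ᵥ u) ^ 2) ≤ Real.sqrt (r * p) :=
        Real.sqrt_le_sqrt (by nlinarith)
      linarith
    linarith

lemma vec_eq_elim (y : Unit ⊕ κ → ℝ) :
    y = Sum.elim (fun _ => y (Sum.inl ())) (fun i => y (Sum.inr i)) := by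
  funext z
  cases z with
  | inl u => cases u; rfl
  | inr i => rfl

lemma bmat_form (c : ℝ) (l : κ → ℝ) (M : Matrix κ κ ℝ) (t : ℝ) (y : κ → ℝ) :
    (Sum.elim (fun _ : Unit => t) y) ⬝ᵥ (bmatI c l M *ᵥ Sum.elim (fun _ : Unit => t) y)
      = c * t ^ 2 + 2 * t * (l ⬝ᵥ y) + y ⬝ᵥ M *ᵥ y := by
  simp only [bmatI, dotProduct, Matrix.mulVec, Fintype.sum_sum_type, Sum.elim_inl,
    Sum.elim_inr, Matrix.fromBlocks_apply₁₁, Matrix.fromBlocks_apply₁₂,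
    Matrix.fromBlocks_apply₂₁, Matrix.fromBlocks_apply₂₂, Matrix.of_apply,
    Finset.univ_unique, Finset.sum_singleton]
  have hB : ∑ x, y x * (l x * t + ∑ x1, M x x1 * y x1)
      = t * (∑ x, l x * y x) + ∑ x, y x * (∑ x1, M x x1 * y x1) := by
    rw [Finset.mul_sum, ← Finset.sum_add_distrib]
    exact Finset.sum_congr rfl fun i _ => by ring
  rw [hB]
  ring

lemma bmat_quad {c : ℝ} {l : κ → ℝ} {M : Matrix κ κ ℝ} (h : (bmatI c l M).PosSemidef)
    (t : ℝ) (y : κ → ℝ) : 0 ≤ c * t ^ 2 + 2 * t * (l ⬝ᵥ y) + y ⬝ᵥ M *ᵥ y := by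
  have h0 := psd_quad _ h (Sum.elim (fun _ : Unit => t) y)
  rwa [bmat_form] at h0

lemma bmat_psd (Q : Matrix κ κ ℝ) (hQ : Q.PosDef) (L : κ → ℝ) (r c γ : ℝ)
    (hr : 0 ≤ r) (hcs : Real.sqrt (r * (L ⬝ᵥ Q⁻¹ *ᵥ L)) ≤ c) (hγ : c ≤ γ) :
    (bmatI c (Real.sqrt r • L) (γ • Q)).PosSemidef := by
  have hc : 0 ≤ c := le_trans (Real.sqrt_nonneg _) hcs
  have hγ0 : 0 ≤ γ := le_trans hc hγ
  have hQt : Qᵀ = Q := herm_transpose hQ.1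
  set p := L ⬝ᵥ Q⁻¹ *ᵥ L with hpdef
  have hp0 : 0 ≤ p := psd_quad _ hQ.inv.posSemidef L
  rw [Matrix.posSemidef_iff_dotProduct_mulVec]
  constructor
  · show _ = _
    ext i j
    cases i with
    | inl u =>
      cases j with
      | inl u' => simp [bmatI, Matrix.conjTranspose_apply]
      | inr j' => simp [bmatI, Matrix.conjTranspose_apply]
    | inr i' =>
      cases j with
      | inl u' => simp [bmatI, Matrix.conjTranspose_apply]
      | inr j' =>
        simp only [bmatI, Matrix.conjTranspose_apply, Matrix.fromBlocks_apply₂₂,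
          Matrix.smul_apply, smul_eq_mul, star_trivial]
        have h2 : Q j' i' = Q i' j' := by
          have := congrFun (congrFun hQt i') j'
          simpa [Matrix.transpose_apply] using this
        rw [h2]
  · intro y
    rw [show (star y : Unit ⊕ κ → ℝ) = y from funext fun _ => star_trivial _]
    rw [vec_eq_elim y, bmat_form]
    set t := y (Sum.inl ()) with htdef
    set y' : κ → ℝ := fun i => y (Sum.inr i) with hydef
    have hq0 : 0 ≤ y' ⬝ᵥ Q *ᵥ y' := psd_quad _ hQ.posSemidef y'
    set q := y' ⬝ᵥ Q *ᵥ y' with hqdef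
    set d := L ⬝ᵥ y' with hddef
    have hyQ : y' ⬝ᵥ (γ • Q) *ᵥ y' = γ * q := by
      rw [Matrix.smul_mulVec, dotProduct_smul, smul_eq_mul]
    have hld : (Real.sqrt r • L) ⬝ᵥ y' = Real.sqrt r * d := by
      rw [smul_dotProduct, smul_eq_mul]
    rw [hyQ, hld]
    -- Cauchy-Schwarz : d ^ 2 ≤ p * q
    have hcs2 : d ^ 2 ≤ p * q := by
      have hQa : Q *ᵥ (Q⁻¹ *ᵥ L) = L := by
        rw [Matrix.mulVec_mulVec, Matrix.mul_nonsing_inv _ hQ.det_pos.ne'.isUnit,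
          Matrix.one_mulVec]
      have hc2 := cs_ineq Q hQ.posSemidef (Q⁻¹ *ᵥ L) y'
      rw [dot_symm Q hQt (Q⁻¹ *ᵥ L) y', hQa, dotProduct_comm y' L,
        dotProduct_comm (Q⁻¹ *ᵥ L) L] at hc2
      exact hc2
    have hr2 : Real.sqrt r ^ 2 = r := Real.sq_sqrt hr
    have hrp : Real.sqrt (r * p) ^ 2 = r * p := Real.sq_sqrt (mul_nonneg hr hp0)
    have key : (Real.sqrt r * d) ^ 2 ≤ c ^ 2 * q := by
      have h1 : (Real.sqrt r * d) ^ 2 = r * d ^ 2 := by rw [mul_pow, hr2]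
      have h2 : r * d ^ 2 ≤ r * (p * q) := by nlinarith
      have h3 : r * (p * q) = (r * p) * q := by ring
      have h4 : r * p ≤ c ^ 2 := by
        calc r * p = Real.sqrt (r * p) ^ 2 := hrp.symm
          _ ≤ c ^ 2 := by
            have := Real.sqrt_nonneg (r * p)
            nlinarith
      nlinarith
    rcases eq_or_lt_of_le hc with hc0 | hcpos
    · have hd02 : (Real.sqrt r * d) ^ 2 = 0 := by
        refine le_antisymm ?_ (sq_nonneg _)
        rw [← hc0] at key
        simpa using key
      have hd0 : Real.sqrt r * d = 0 := by
        exact pow_eq_zero_iff (n := 2) (by norm_num) |>.1 hd02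
      rw [← hc0, hd0]
      nlinarith
    · nlinarith [sq_nonneg (c * t + Real.sqrt r * d), mul_nonneg (mul_nonneg hc hq0)
        (sub_nonneg.2 hγ), key, hcpos]

lemma bmat_psd_to (Q : Matrix κ κ ℝ) (hQ : Q.PosDef) (L : κ → ℝ) (r γ β : ℝ)
    (hr : 0 ≤ r) (hβ : 0 < β)
    (hpsd : (bmatI (γ - β) (Real.sqrt r • L) (γ • Q)).PosSemidef) :
    Real.sqrt (r * (L ⬝ᵥ Q⁻¹ *ᵥ L)) < γ := by
  have hQt : Qᵀ = Q := herm_transpose hQ.1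
  set p := L ⬝ᵥ Q⁻¹ *ᵥ L with hpdef
  have hp0 : 0 ≤ p := psd_quad _ hQ.inv.posSemidef L
  have form : ∀ t : ℝ, ∀ y' : κ → ℝ,
      0 ≤ (γ - β) * t ^ 2 + 2 * t * (Real.sqrt r * (L ⬝ᵥ y')) + γ * (y' ⬝ᵥ Q *ᵥ y') := by
    intro t y'
    have := bmat_quad hpsd t y'
    rwa [smul_dotProduct, smul_eq_mul, Matrix.smul_mulVec,
      dotProduct_smul, smul_eq_mul] at this
  have h1 : β ≤ γ := by
    have := form 1 0
    simp at this
    linarith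
  have hγpos : 0 < γ := lt_of_lt_of_le hβ h1
  rcases eq_or_lt_of_le hp0 with hp | hp
  · rw [← hp, mul_zero, Real.sqrt_zero]
    exact hγpos
  · set a : κ → ℝ := Q⁻¹ *ᵥ L with ha
    have hQa : Q *ᵥ a = L := by
      rw [ha, Matrix.mulVec_mulVec, Matrix.mul_nonsing_inv _ hQ.det_pos.ne'.isUnit,
        Matrix.one_mulVec]
    have hLa : L ⬝ᵥ a = p := rfl
    have haQa : a ⬝ᵥ Q *ᵥ a = p := by rw [hQa]; rw [dotProduct_comm]
    have hr2 : Real.sqrt r ^ 2 = r := Real.sq_sqrt hr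
    have hform := form γ ((-(Real.sqrt r)) • a)
    rw [dotProduct_smul, Matrix.mulVec_smul, smul_dotProduct,
      dotProduct_smul, hLa, haQa, smul_eq_mul, smul_eq_mul] at hform
    have hexp : (γ - β) * γ ^ 2 + 2 * γ * (Real.sqrt r * (-(Real.sqrt r) * p))
        + γ * (-(Real.sqrt r) * (-(Real.sqrt r) * p))
        = (γ - β) * γ ^ 2 - γ * (r * p) := by
      linear_combination (-(γ * p)) * hr2
    rw [hexp] at hform
    have hrp : r * p < γ ^ 2 := by
      nlinarith [hform, hβ, hγpos, mul_pos hγpos hγpos, mul_pos hβ (mul_pos hγpos hγpos)]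
    have := Real.sqrt_lt_sqrt (mul_nonneg hr hp0) hrp
    rwa [Real.sqrt_sq hγpos.le] at this
end Aux


section Data
set_option linter.unusedSectionVars false
set_option maxHeartbeats 1000000

variable {n f g T : ℕ} (Xd : Matrix (Fin n) (Fin T) ℝ) (Fd : Matrix (Fin f) (Fin T) ℝ)
  (Hd : Matrix (Fin g) (Fin T) ℝ) (Φ11 : ℝ) (s : Finset (ParamIdx n f g))
  (vs : {i // i ∈ s} → ℝ)

/-- The submatrix of `D` with rows indexed by `sᶜ`. -/
def DsbM : Matrix {i // i ∈ sᶜ} (Fin n × Fin T) ℝ :=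
  (Dmat Fd Hd).submatrix (fun i => i.1) id

/-- The submatrix of `D` with rows indexed by `s`. -/
def DsM : Matrix {i // i ∈ s} (Fin n × Fin T) ℝ :=
  (Dmat Fd Hd).submatrix (fun i => i.1) id

/-- The vector `vec(Ẋᵀ) − D_{s•}ᵀ v_s`. -/
def w0 : Fin n × Fin T → ℝ := fun p => Xd p.1 p.2 - ((DsM Fd Hd s)ᵀ *ᵥ vs) p

lemma Mmat_inr_inl (p : Fin n × Fin T) (u : Unit) :
    Mmat Xd Fd Hd s vs (Sum.inr p) (Sum.inl u) = w0 Xd Fd Hd s vs p := rfl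

lemma Mmat_inr_inr (p : Fin n × Fin T) (j : {i // i ∈ sᶜ}) :
    Mmat Xd Fd Hd s vs (Sum.inr p) (Sum.inr j) = -(DsbM Fd Hd s j p) := rfl

lemma Mmat_inl_inl (u u' : Unit) :
    Mmat Xd Fd Hd s vs (Sum.inl u) (Sum.inl u') = 1 := rfl

lemma Mmat_inl_inr (u : Unit) (j : {i // i ∈ sᶜ}) :
    Mmat Xd Fd Hd s vs (Sum.inl u) (Sum.inr j) = 0 := rfl

lemma Nmat_apply (i j : Unit ⊕ {i // i ∈ sᶜ}) :
    Nmat Xd Fd Hd Φ11 s vs i j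
      = Φ11 * (Mmat Xd Fd Hd s vs (Sum.inl ()) i * Mmat Xd Fd Hd s vs (Sum.inl ()) j)
        - ∑ p : Fin n × Fin T,
            Mmat Xd Fd Hd s vs (Sum.inr p) i * Mmat Xd Fd Hd s vs (Sum.inr p) j := by
  have hMP : ∀ (k : Unit ⊕ (Fin n × Fin T)),
      (((Mmat Xd Fd Hd s vs)ᵀ * PhiMat (n := n) (T := T) Φ11 :
        Matrix (Unit ⊕ {i // i ∈ sᶜ}) (Unit ⊕ (Fin n × Fin T)) ℝ)) i k
      = Sum.elim (fun _ : Unit => Φ11 * Mmat Xd Fd Hd s vs (Sum.inl ()) i)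
          (fun p => -(Mmat Xd Fd Hd s vs (Sum.inr p) i)) k := by
    intro k
    cases k with
    | inl u =>
      cases u
      simp [Matrix.mul_apply, Fintype.sum_sum_type, PhiMat, Matrix.one_apply, mul_comm]
    | inr p =>
      simp [Matrix.mul_apply, Fintype.sum_sum_type, PhiMat, Matrix.one_apply, mul_comm]
  rw [Nmat, Matrix.mul_apply, Fintype.sum_sum_type]
  have hdef : (default : Unit) = () := rfl
  simp only [hMP, hdef, Sum.elim_inl, Sum.elim_inr, Finset.univ_unique, Finset.sum_singleton,
    neg_mul, Finset.sum_neg_distrib]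
  ring

lemma Nmat_11 :
    Nmat Xd Fd Hd Φ11 s vs (Sum.inl ()) (Sum.inl ())
      = Φ11 - ∑ p : Fin n × Fin T, w0 Xd Fd Hd s vs p ^ 2 := by
  rw [Nmat_apply]
  simp [Mmat_inl_inl, Mmat_inr_inl, sq]

lemma Nmat_21 (j : {i // i ∈ sᶜ}) :
    Nmat Xd Fd Hd Φ11 s vs (Sum.inr j) (Sum.inl ())
      = (DsbM Fd Hd s *ᵥ w0 Xd Fd Hd s vs) j := by
  rw [Nmat_apply]
  simp only [Mmat_inl_inl, Mmat_inl_inr, Mmat_inr_inl, Mmat_inr_inr, mul_zero, zero_mul,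
    mul_one, neg_mul, Finset.sum_neg_distrib, zero_sub, neg_neg]
  rfl

lemma Nmat_22 :
    (Nmat Xd Fd Hd Φ11 s vs).toBlocks₂₂ = -(DsbM Fd Hd s * (DsbM Fd Hd s)ᵀ) := by
  ext i j
  rw [Matrix.toBlocks₂₂]
  simp only [Matrix.of_apply, Matrix.neg_apply, Matrix.mul_apply, Matrix.transpose_apply]
  rw [Nmat_apply]
  simp only [Mmat_inl_inr, Mmat_inr_inr, mul_zero, zero_mul, zero_sub, neg_mul, mul_neg,
    neg_neg, Finset.sum_neg_distrib, neg_inj]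

lemma vecMul_inj (hrank : (Matrix.fromRows Fd Hd).rank = f + g)
    (c : Fin f ⊕ Fin g → ℝ) (hc : c ᵥ* (Matrix.fromRows Fd Hd) = 0) : c = 0 := by
  set A := Matrix.fromRows Fd Hd with hA
  have hrt : Aᵀ.rank = f + g := by rw [Matrix.rank_transpose]; exact hrank
  have h1 := LinearMap.finrank_range_add_finrank_ker (Aᵀ.mulVecLin)
  have h2 : Module.finrank ℝ ((Fin f ⊕ Fin g) → ℝ) = f + g := by
    rw [Module.finrank_fintype_fun_eq_card, Fintype.card_sum, Fintype.card_fin, Fintype.card_fin]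
  rw [h2] at h1
  have h3 : Module.finrank ℝ (LinearMap.range Aᵀ.mulVecLin) = f + g := hrt
  have h4 : Module.finrank ℝ (LinearMap.ker Aᵀ.mulVecLin) = 0 := by omega
  have hker : LinearMap.ker (Aᵀ.mulVecLin) = ⊥ := Submodule.finrank_eq_zero.mp h4
  have hmem : c ∈ LinearMap.ker (Aᵀ.mulVecLin) := by
    rw [LinearMap.mem_ker, Matrix.mulVecLin_apply, Matrix.mulVec_transpose]
    exact hc
  rw [hker] at hmem
  simpa using hmem

lemma D_rows_indep (hrank : (Matrix.fromRows Fd Hd).rank = f + g)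
    (c : ParamIdx n f g → ℝ)
    (hc : ∀ p : Fin n × Fin T, ∑ r, c r * Dmat Fd Hd r p = 0) : c = 0 := by
  have key : ∀ i : Fin n,
      (Sum.elim (fun a => c (Sum.inl (i, a))) (fun b => c (Sum.inr (i, b)))
        : Fin f ⊕ Fin g → ℝ) = 0 := by
    intro i
    apply vecMul_inj Fd Hd hrank
    funext t
    have h := hc (i, t)
    rw [Fintype.sum_sum_type] at h
    simp only [Dmat, Matrix.fromRows_apply_inl, Matrix.fromRows_apply_inr,
      Matrix.kroneckerMap_apply, Matrix.one_apply, Fintype.sum_prod_type_right, mul_ite,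
      ite_mul, mul_one, one_mul, mul_zero, zero_mul, Finset.sum_ite_eq, Finset.sum_ite_eq',
      Finset.mem_univ, if_true] at h
    simp only [Matrix.vecMul, dotProduct, Fintype.sum_sum_type, Sum.elim_inl,
      Sum.elim_inr, Matrix.fromRows_apply_inl, Matrix.fromRows_apply_inr, Pi.zero_apply]
    exact h
  funext r
  cases r with
  | inl q => exact congrFun (key q.1) (Sum.inl q.2)
  | inr q => exact congrFun (key q.1) (Sum.inr q.2)

lemma Dsb_vecMul_inj (hrank : (Matrix.fromRows Fd Hd).rank = f + g)
    (z : {i // i ∈ sᶜ} → ℝ) (hz : z ᵥ* DsbM Fd Hd s = 0) : z = 0 := by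
  classical
  set c : ParamIdx n f g → ℝ := fun r => if h : r ∈ sᶜ then z ⟨r, h⟩ else 0 with hcdef
  have hc0 : c = 0 := by
    apply D_rows_indep Fd Hd hrank
    intro p
    have h1 : ∑ r, c r * Dmat Fd Hd r p = ∑ r ∈ sᶜ, c r * Dmat Fd Hd r p := by
      refine (Finset.sum_subset (Finset.subset_univ _) ?_).symm
      intro r _ hr
      have hcr : c r = 0 := by rw [hcdef]; exact dif_neg hr
      rw [hcr, zero_mul]
    have h2 : ∑ r ∈ sᶜ, c r * Dmat Fd Hd r p
        = ∑ r : {i // i ∈ sᶜ}, z r * DsbM Fd Hd s r p := by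
      rw [← Finset.sum_coe_sort (sᶜ) (fun r => c r * Dmat Fd Hd r p)]
      refine Finset.sum_congr rfl fun r _ => ?_
      have hcr : c r.1 = z r := by rw [hcdef]; exact dif_pos r.2
      rw [hcr]
      rfl
    rw [h1, h2]
    exact congrFun hz p
  funext i
  have h5 := congrFun hc0 i.1
  have hcr : c i.1 = z i := by rw [hcdef]; exact dif_pos i.2
  rw [hcr] at h5
  exact h5

lemma Qm_posdef (hrank : (Matrix.fromRows Fd Hd).rank = f + g) :
    (DsbM Fd Hd s * (DsbM Fd Hd s)ᵀ).PosDef := by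
  rw [Matrix.posDef_iff_dotProduct_mulVec]
  constructor
  · show _ = _
    ext i j
    simp only [Matrix.conjTranspose_apply, Matrix.mul_apply, Matrix.transpose_apply,
      star_trivial]
    exact Finset.sum_congr rfl fun p _ => mul_comm _ _
  · intro x hx
    have hstar : (star x : {i // i ∈ sᶜ} → ℝ) = x := funext fun _ => star_trivial _
    rw [hstar]
    have hrw : x ⬝ᵥ (DsbM Fd Hd s * (DsbM Fd Hd s)ᵀ) *ᵥ x
        = (x ᵥ* DsbM Fd Hd s) ⬝ᵥ (x ᵥ* DsbM Fd Hd s) := by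
      rw [← Matrix.mulVec_mulVec, Matrix.dotProduct_mulVec, Matrix.mulVec_transpose]
    rw [hrw]
    have hu : x ᵥ* DsbM Fd Hd s ≠ 0 := fun h => hx (Dsb_vecMul_inj Fd Hd s hrank x h)
    have h1 : 0 ≤ (x ᵥ* DsbM Fd Hd s) ⬝ᵥ (x ᵥ* DsbM Fd Hd s) :=
      Finset.sum_nonneg fun i _ => mul_self_nonneg _
    rcases h1.eq_or_lt with h | h
    · exact absurd (dotProduct_self_eq_zero.mp h.symm) hu
    · exact h

lemma sum_prod_eq (F : Fin n → Fin T → ℝ) :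
    ∑ p : Fin n × Fin T, F p.1 p.2 = ∑ i, ∑ t, F i t := by
  rw [Fintype.sum_prod_type]

lemma Dt_mulVec_eval (v : ParamIdx n f g → ℝ) (p : Fin n × Fin T) :
    ((Dmat Fd Hd)ᵀ *ᵥ v) p
      = (∑ a, v (Sum.inl (p.1, a)) * Fd a p.2) + ∑ b, v (Sum.inr (p.1, b)) * Hd b p.2 := by
  simp only [Matrix.mulVec, dotProduct, Matrix.transpose_apply, Fintype.sum_sum_type,
    Dmat, Matrix.fromRows_apply_inl, Matrix.fromRows_apply_inr, Matrix.kroneckerMap_apply,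
    Matrix.one_apply, Fintype.sum_prod_type_right, mul_ite, ite_mul, mul_one, one_mul,
    mul_zero, zero_mul, Finset.sum_ite_eq, Finset.sum_ite_eq', Finset.mem_univ, if_true]
  congr 1
  · exact Finset.sum_congr rfl fun a _ => mul_comm _ _
  · exact Finset.sum_congr rfl fun b _ => mul_comm _ _

lemma AFBH (A : Matrix (Fin n) (Fin f) ℝ) (B : Matrix (Fin n) (Fin g) ℝ)
    (p : Fin n × Fin T) :
    (A * Fd) p.1 p.2 + (B * Hd) p.1 p.2 = ((Dmat Fd Hd)ᵀ *ᵥ paramVec A B) p := by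
  rw [Dt_mulVec_eval]
  simp only [Matrix.mul_apply, paramVec, Sum.elim_inl, Sum.elim_inr]

lemma Dt_mulVec_split (v : ParamIdx n f g → ℝ) (p : Fin n × Fin T) :
    ((Dmat Fd Hd)ᵀ *ᵥ v) p
      = ((DsM Fd Hd s)ᵀ *ᵥ fun i => v i.1) p + ((DsbM Fd Hd s)ᵀ *ᵥ fun i => v i.1) p := by
  simp only [Matrix.mulVec, dotProduct, Matrix.transpose_apply, DsM, DsbM,
    Matrix.submatrix_apply, id_eq]
  rw [Finset.sum_coe_sort s (fun r => Dmat Fd Hd r p * v r),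
    Finset.sum_coe_sort sᶜ (fun r => Dmat Fd Hd r p * v r)]
  exact (Finset.sum_add_sum_compl s _).symm

lemma mem_sigma_iff (AB : Matrix (Fin n) (Fin f) ℝ × Matrix (Fin n) (Fin g) ℝ) :
    AB ∈ SigmaSet Xd Fd Hd Φ11 s vs ↔
      (∀ i : {i // i ∈ s}, paramVec AB.1 AB.2 i.1 = vs i) ∧
        ∑ p : Fin n × Fin T,
          (w0 Xd Fd Hd s vs p
            - ((DsbM Fd Hd s)ᵀ *ᵥ fun i : {i // i ∈ sᶜ} => paramVec AB.1 AB.2 i.1) p) ^ 2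
          ≤ Φ11 := by
  obtain ⟨A, B⟩ := AB
  have hkey : (∀ i : {i // i ∈ s}, paramVec A B i.1 = vs i) →
      ∀ p : Fin n × Fin T,
        Xd p.1 p.2 - ((A * Fd) p.1 p.2 + (B * Hd) p.1 p.2)
          = w0 Xd Fd Hd s vs p
            - ((DsbM Fd Hd s)ᵀ *ᵥ fun i : {i // i ∈ sᶜ} => paramVec A B i.1) p := by
    intro h1 p
    rw [AFBH, Dt_mulVec_split Fd Hd s (paramVec A B) p]
    have hvs : (fun i : {i // i ∈ s} => paramVec A B i.1) = vs := funext h1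
    rw [hvs, w0]
    ring
  constructor
  · rintro ⟨h1, W, hW, hXd⟩
    refine ⟨h1, ?_⟩
    have hWv : ∀ p : Fin n × Fin T,
        W p.1 p.2 = Xd p.1 p.2 - ((A * Fd) p.1 p.2 + (B * Hd) p.1 p.2) := by
      intro p
      have h2 := congrFun (congrFun hXd p.1) p.2
      simp only [Matrix.add_apply] at h2
      linarith
    calc ∑ p : Fin n × Fin T,
          (w0 Xd Fd Hd s vs p
            - ((DsbM Fd Hd s)ᵀ *ᵥ fun i : {i // i ∈ sᶜ} => paramVec A B i.1) p) ^ 2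
        = ∑ p : Fin n × Fin T, W p.1 p.2 ^ 2 := by
          refine Finset.sum_congr rfl fun p _ => ?_
          rw [← hkey h1 p, ← hWv p]
      _ = ∑ i, ∑ t, W i t ^ 2 := sum_prod_eq (fun i t => W i t ^ 2)
      _ ≤ Φ11 := hW
  · rintro ⟨h1, hsum⟩
    refine ⟨h1, Xd - A * Fd - B * Hd, ?_, by ext i t; simp⟩
    calc ∑ i, ∑ t, (Xd - A * Fd - B * Hd) i t ^ 2
        = ∑ p : Fin n × Fin T, (Xd - A * Fd - B * Hd) p.1 p.2 ^ 2 :=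
          (sum_prod_eq (fun i t => (Xd - A * Fd - B * Hd) i t ^ 2)).symm
      _ = ∑ p : Fin n × Fin T,
          (w0 Xd Fd Hd s vs p
            - ((DsbM Fd Hd s)ᵀ *ᵥ fun i : {i // i ∈ sᶜ} => paramVec A B i.1) p) ^ 2 := by
          refine Finset.sum_congr rfl fun p _ => ?_
          rw [← hkey h1 p]
          simp only [Matrix.sub_apply]
          ring
      _ ≤ Φ11 := hsum

lemma sigma_param_surj (z : {i // i ∈ sᶜ} → ℝ) :
    ∃ AB : Matrix (Fin n) (Fin f) ℝ × Matrix (Fin n) (Fin g) ℝ,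
      (∀ i : {i // i ∈ s}, paramVec AB.1 AB.2 i.1 = vs i) ∧
      (fun i : {i // i ∈ sᶜ} => paramVec AB.1 AB.2 i.1) = z := by
  classical
  set v : ParamIdx n f g → ℝ :=
    fun r => if h : r ∈ s then vs ⟨r, h⟩ else z ⟨r, Finset.mem_compl.2 h⟩ with hv
  refine ⟨(Matrix.of fun i a => v (Sum.inl (i, a)), Matrix.of fun i b => v (Sum.inr (i, b))),
    ?_, ?_⟩
  · rintro ⟨r, hr⟩
    cases r with
    | inl q =>
      show v (Sum.inl q) = vs ⟨Sum.inl q, hr⟩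
      rw [hv]; exact dif_pos hr
    | inr q =>
      show v (Sum.inr q) = vs ⟨Sum.inr q, hr⟩
      rw [hv]; exact dif_pos hr
  · funext i
    rcases i with ⟨r, hr⟩
    have hr' : r ∉ s := Finset.mem_compl.1 hr
    cases r with
    | inl q =>
      show v (Sum.inl q) = z ⟨Sum.inl q, hr⟩
      rw [hv]; exact dif_neg hr'
    | inr q =>
      show v (Sum.inr q) = z ⟨Sum.inr q, hr⟩
      rw [hv]; exact dif_neg hr'

lemma dot_split (Lv v : ParamIdx n f g → ℝ) :
    Lv ⬝ᵥ v = ((fun i : {i // i ∈ s} => Lv i.1) ⬝ᵥ fun i => v i.1)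
      + ((fun i : {i // i ∈ sᶜ} => Lv i.1) ⬝ᵥ fun i => v i.1) := by
  simp only [dotProduct]
  rw [Finset.sum_coe_sort s (fun r => Lv r * v r),
    Finset.sum_coe_sort sᶜ (fun r => Lv r * v r)]
  exact (Finset.sum_add_sum_compl s _).symm

/-- `Q = D_{s̄•} D_{s̄•}ᵀ`. -/
def QM : Matrix {i // i ∈ sᶜ} {i // i ∈ sᶜ} ℝ := DsbM Fd Hd s * (DsbM Fd Hd s)ᵀ

/-- Center of the ellipsoid `Σ` in `v_s̄`-coordinates. -/
def vhatV : {i // i ∈ sᶜ} → ℝ := (QM Fd Hd s)⁻¹ *ᵥ (DsbM Fd Hd s *ᵥ w0 Xd Fd Hd s vs)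

/-- The (generalized) Schur complement `N|N₂₂`. -/
def schurV : ℝ :=
  Nmat Xd Fd Hd Φ11 s vs (Sum.inl ()) (Sum.inl ())
    - (fun i => Nmat Xd Fd Hd Φ11 s vs (Sum.inr i) (Sum.inl ())) ⬝ᵥ
        ((Nmat Xd Fd Hd Φ11 s vs).toBlocks₂₂)⁻¹ *ᵥ
        fun i => Nmat Xd Fd Hd Φ11 s vs (Sum.inr i) (Sum.inl ())

lemma QM_posdef (hrank : (Matrix.fromRows Fd Hd).rank = f + g) :
    (QM Fd Hd s).PosDef := Qm_posdef Fd Hd s hrank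

lemma N22_inv (hrank : (Matrix.fromRows Fd Hd).rank = f + g) :
    ((Nmat Xd Fd Hd Φ11 s vs).toBlocks₂₂)⁻¹ = -(QM Fd Hd s)⁻¹ := by
  rw [Nmat_22]
  show (-(QM Fd Hd s))⁻¹ = _
  refine Matrix.inv_eq_right_inv ?_
  rw [Matrix.neg_mul, Matrix.mul_neg, neg_neg,
    Matrix.mul_nonsing_inv (QM Fd Hd s) (QM_posdef Fd Hd s hrank).det_pos.ne'.isUnit]

lemma schur_eq (hrank : (Matrix.fromRows Fd Hd).rank = f + g) :
    schurV Xd Fd Hd Φ11 s vs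
      = Φ11 - (∑ p : Fin n × Fin T, w0 Xd Fd Hd s vs p ^ 2)
        + (DsbM Fd Hd s *ᵥ w0 Xd Fd Hd s vs) ⬝ᵥ (QM Fd Hd s)⁻¹ *ᵥ
            (DsbM Fd Hd s *ᵥ w0 Xd Fd Hd s vs) := by
  rw [schurV, Nmat_11, N22_inv Xd Fd Hd Φ11 s vs hrank]
  have hn : (fun i => Nmat Xd Fd Hd Φ11 s vs (Sum.inr i) (Sum.inl ()))
      = DsbM Fd Hd s *ᵥ w0 Xd Fd Hd s vs := funext (Nmat_21 Xd Fd Hd Φ11 s vs)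
  rw [hn, Matrix.neg_mulVec, dotProduct_neg]
  ring

lemma quad_id (hrank : (Matrix.fromRows Fd Hd).rank = f + g) (z : {i // i ∈ sᶜ} → ℝ) :
    Φ11 - ∑ p : Fin n × Fin T, (w0 Xd Fd Hd s vs p - ((DsbM Fd Hd s)ᵀ *ᵥ z) p) ^ 2
      = schurV Xd Fd Hd Φ11 s vs
        - (z - vhatV Xd Fd Hd s vs) ⬝ᵥ (QM Fd Hd s) *ᵥ (z - vhatV Xd Fd Hd s vs) := by
  have hQ := QM_posdef Fd Hd s hrank
  have hQt : (QM Fd Hd s)ᵀ = QM Fd Hd s := herm_transpose hQ.1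
  set w := w0 Xd Fd Hd s vs with hw
  set Dw := DsbM Fd Hd s *ᵥ w with hDw
  set u := (DsbM Fd Hd s)ᵀ *ᵥ z with hu
  have huw : u ⬝ᵥ w = z ⬝ᵥ Dw := by
    rw [hu, Matrix.mulVec_transpose, ← Matrix.dotProduct_mulVec, hDw]
  have huu : u ⬝ᵥ u = z ⬝ᵥ (QM Fd Hd s) *ᵥ z := by
    have hA : u ⬝ᵥ u = (z ᵥ* DsbM Fd Hd s) ⬝ᵥ (z ᵥ* DsbM Fd Hd s) := by
      rw [hu, Matrix.mulVec_transpose]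
    have hB : z ⬝ᵥ (QM Fd Hd s) *ᵥ z
        = (z ᵥ* DsbM Fd Hd s) ⬝ᵥ (z ᵥ* DsbM Fd Hd s) := by
      show z ⬝ᵥ (DsbM Fd Hd s * (DsbM Fd Hd s)ᵀ) *ᵥ z = _
      rw [← Matrix.mulVec_mulVec, Matrix.dotProduct_mulVec, Matrix.mulVec_transpose]
    rw [hA, hB]
  have e1 : ∑ p : Fin n × Fin T, (w p - u p) ^ 2
      = (∑ p : Fin n × Fin T, w p ^ 2) - 2 * (z ⬝ᵥ Dw) + z ⬝ᵥ (QM Fd Hd s) *ᵥ z := by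
    have hterm : ∀ p : Fin n × Fin T, (w p - u p) ^ 2
        = w p ^ 2 - 2 * (u p * w p) + u p * u p := fun p => by ring
    rw [Finset.sum_congr rfl fun p _ => hterm p]
    rw [Finset.sum_add_distrib, Finset.sum_sub_distrib, ← Finset.mul_sum]
    have h1 : ∑ p, u p * w p = u ⬝ᵥ w := rfl
    have h2 : ∑ p, u p * u p = u ⬝ᵥ u := rfl
    rw [h1, h2, huw, huu]
  have hQv : (QM Fd Hd s) *ᵥ vhatV Xd Fd Hd s vs = Dw := by
    rw [vhatV, ← hw, ← hDw, Matrix.mulVec_mulVec,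
      Matrix.mul_nonsing_inv (QM Fd Hd s) hQ.det_pos.ne'.isUnit, Matrix.one_mulVec]
  set vh := vhatV Xd Fd Hd s vs with hvh
  have e2 : (z - vh) ⬝ᵥ (QM Fd Hd s) *ᵥ (z - vh)
      = z ⬝ᵥ (QM Fd Hd s) *ᵥ z - 2 * (z ⬝ᵥ Dw) + Dw ⬝ᵥ (QM Fd Hd s)⁻¹ *ᵥ Dw := by
    rw [Matrix.mulVec_sub, sub_dotProduct, dotProduct_sub,
      dotProduct_sub, hQv]
    have hsym : vh ⬝ᵥ (QM Fd Hd s) *ᵥ z = z ⬝ᵥ (QM Fd Hd s) *ᵥ vh :=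
      dot_symm _ hQt _ _
    rw [hsym, hQv]
    have hvd : vh ⬝ᵥ Dw = Dw ⬝ᵥ (QM Fd Hd s)⁻¹ *ᵥ Dw := by
      rw [hvh, vhatV, ← hDw, dotProduct_comm]
    rw [hvd]
    ring
  rw [e1, e2, schur_eq Xd Fd Hd Φ11 s vs hrank, ← hw, ← hDw]
  ring

lemma schur_nonneg (hrank : (Matrix.fromRows Fd Hd).rank = f + g)
    (hSig : (SigmaSet Xd Fd Hd Φ11 s vs).Nonempty) : 0 ≤ schurV Xd Fd Hd Φ11 s vs := by
  obtain ⟨AB, hAB⟩ := hSig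
  rw [mem_sigma_iff] at hAB
  obtain ⟨h1, h2⟩ := hAB
  have hq := quad_id Xd Fd Hd Φ11 s vs hrank (fun i => paramVec AB.1 AB.2 i.1)
  have hd : 0 ≤ ((fun i : {i // i ∈ sᶜ} => paramVec AB.1 AB.2 i.1) - vhatV Xd Fd Hd s vs)
      ⬝ᵥ (QM Fd Hd s) *ᵥ
      ((fun i : {i // i ∈ sᶜ} => paramVec AB.1 AB.2 i.1) - vhatV Xd Fd Hd s vs) :=
    psd_quad _ (QM_posdef Fd Hd s hrank).posSemidef _
  linarith

lemma core_iff (hrank : (Matrix.fromRows Fd Hd).rank = f + g)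
    (hSig : (SigmaSet Xd Fd Hd Φ11 s vs).Nonempty) (Lv : ParamIdx n f g → ℝ) :
    (∀ AB ∈ SigmaSet Xd Fd Hd Φ11 s vs, 0 < Lv ⬝ᵥ paramVec AB.1 AB.2) ↔
      Real.sqrt (schurV Xd Fd Hd Φ11 s vs *
          ((fun i : {i // i ∈ sᶜ} => Lv i.1) ⬝ᵥ (QM Fd Hd s)⁻¹ *ᵥ fun i => Lv i.1))
        < ((fun i : {i // i ∈ s} => Lv i.1) ⬝ᵥ vs)
          + ((fun i : {i // i ∈ sᶜ} => Lv i.1) ⬝ᵥ vhatV Xd Fd Hd s vs) := by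
  have hQ := QM_posdef Fd Hd s hrank
  rw [← ellipsoid_iff (QM Fd Hd s) hQ (fun i => Lv i.1) (schurV Xd Fd Hd Φ11 s vs)
    _ (schur_nonneg Xd Fd Hd Φ11 s vs hrank hSig)]
  set vh := vhatV Xd Fd Hd s vs with hvh
  constructor
  · intro h u hu
    obtain ⟨AB, h1, h2⟩ := sigma_param_surj s vs (u + vh)
    have hmem : AB ∈ SigmaSet Xd Fd Hd Φ11 s vs := by
      rw [mem_sigma_iff]
      refine ⟨h1, ?_⟩
      rw [h2]
      have hq := quad_id Xd Fd Hd Φ11 s vs hrank (u + vh)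
      have hcan : u + vh - vh = u := add_sub_cancel_right u vh
      rw [hcan] at hq
      linarith
    have h3 := h AB hmem
    rw [dot_split s Lv (paramVec AB.1 AB.2)] at h3
    have hv1 : (fun i : {i // i ∈ s} => paramVec AB.1 AB.2 i.1) = vs := funext h1
    rw [hv1, h2, dotProduct_add] at h3
    linarith
  · intro h AB hmem
    rw [mem_sigma_iff] at hmem
    obtain ⟨h1, h2⟩ := hmem
    have hq := quad_id Xd Fd Hd Φ11 s vs hrank (fun i => paramVec AB.1 AB.2 i.1)
    have hu : ((fun i : {i // i ∈ sᶜ} => paramVec AB.1 AB.2 i.1) - vh) ⬝ᵥ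
        (QM Fd Hd s) *ᵥ ((fun i : {i // i ∈ sᶜ} => paramVec AB.1 AB.2 i.1) - vh)
        ≤ schurV Xd Fd Hd Φ11 s vs := by linarith
    have h3 := h _ hu
    rw [dotProduct_sub] at h3
    rw [dot_split s Lv (paramVec AB.1 AB.2)]
    have hv1 : (fun i : {i // i ∈ s} => paramVec AB.1 AB.2 i.1) = vs := funext h1
    rw [hv1]
    linarith

lemma bridge (hrank : (Matrix.fromRows Fd Hd).rank = f + g)
    (hSig : (SigmaSet Xd Fd Hd Φ11 s vs).Nonempty) (Lv : ParamIdx n f g → ℝ) :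
    (∀ AB ∈ SigmaSet Xd Fd Hd Φ11 s vs, 0 < Lv ⬝ᵥ paramVec AB.1 AB.2) ↔
      ∃ b : ℝ, 0 < b ∧
        (bmatI
          (-((fun i : {i // i ∈ sᶜ} => Lv i.1) ⬝ᵥ
              ((Nmat Xd Fd Hd Φ11 s vs).toBlocks₂₂)⁻¹ *ᵥ
              fun i => Nmat Xd Fd Hd Φ11 s vs (Sum.inr i) (Sum.inl ()))
            + ((fun i : {i // i ∈ s} => Lv i.1) ⬝ᵥ vs) - b)
          (Real.sqrt (schurV Xd Fd Hd Φ11 s vs) • fun i : {i // i ∈ sᶜ} => Lv i.1)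
          (((fun i : {i // i ∈ sᶜ} => Lv i.1) ⬝ᵥ
              ((Nmat Xd Fd Hd Φ11 s vs).toBlocks₂₂)⁻¹ *ᵥ
              (fun i => Nmat Xd Fd Hd Φ11 s vs (Sum.inr i) (Sum.inl ()))
            - ((fun i : {i // i ∈ s} => Lv i.1) ⬝ᵥ vs))
            • (Nmat Xd Fd Hd Φ11 s vs).toBlocks₂₂)).PosSemidef := by
  have hQ := QM_posdef Fd Hd s hrank
  have hr0 := schur_nonneg Xd Fd Hd Φ11 s vs hrank hSig
  set Lsb : {i // i ∈ sᶜ} → ℝ := fun i => Lv i.1 with hLsb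
  set Ls : {i // i ∈ s} → ℝ := fun i => Lv i.1 with hLs
  set vh := vhatV Xd Fd Hd s vs with hvh
  set γ : ℝ := (Ls ⬝ᵥ vs) + (Lsb ⬝ᵥ vh) with hγ
  set p : ℝ := Lsb ⬝ᵥ (QM Fd Hd s)⁻¹ *ᵥ Lsb with hp
  have hn : (fun i => Nmat Xd Fd Hd Φ11 s vs (Sum.inr i) (Sum.inl ()))
      = DsbM Fd Hd s *ᵥ w0 Xd Fd Hd s vs := funext (Nmat_21 Xd Fd Hd Φ11 s vs)
  have hγkey : Lsb ⬝ᵥ ((Nmat Xd Fd Hd Φ11 s vs).toBlocks₂₂)⁻¹ *ᵥ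
      (fun i => Nmat Xd Fd Hd Φ11 s vs (Sum.inr i) (Sum.inl ())) = -(Lsb ⬝ᵥ vh) := by
    rw [hn, N22_inv Xd Fd Hd Φ11 s vs hrank, Matrix.neg_mulVec, dotProduct_neg]
    rw [hvh, vhatV]
  rw [core_iff Xd Fd Hd Φ11 s vs hrank hSig Lv]
  constructor
  · intro h
    refine ⟨γ - Real.sqrt (schurV Xd Fd Hd Φ11 s vs * p), sub_pos.2 h, ?_⟩
    have hc : -(Lsb ⬝ᵥ ((Nmat Xd Fd Hd Φ11 s vs).toBlocks₂₂)⁻¹ *ᵥ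
          fun i => Nmat Xd Fd Hd Φ11 s vs (Sum.inr i) (Sum.inl ()))
        + (Ls ⬝ᵥ vs) - (γ - Real.sqrt (schurV Xd Fd Hd Φ11 s vs * p))
        = Real.sqrt (schurV Xd Fd Hd Φ11 s vs * p) := by
      rw [hγkey]; rw [hγ]; ring
    have hco : (Lsb ⬝ᵥ ((Nmat Xd Fd Hd Φ11 s vs).toBlocks₂₂)⁻¹ *ᵥ
          (fun i => Nmat Xd Fd Hd Φ11 s vs (Sum.inr i) (Sum.inl ()))) - (Ls ⬝ᵥ vs)
        = -γ := by rw [hγkey]; rw [hγ]; ring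
    rw [hc, hco, Nmat_22]
    have hMM : (-γ) • -(DsbM Fd Hd s * (DsbM Fd Hd s)ᵀ) = γ • QM Fd Hd s := by
      rw [neg_smul, smul_neg, neg_neg]; rfl
    rw [hMM]
    exact bmat_psd (QM Fd Hd s) hQ Lsb (schurV Xd Fd Hd Φ11 s vs) _ γ hr0 le_rfl h.le
  · rintro ⟨b, hb, hpsd⟩
    have hc : -(Lsb ⬝ᵥ ((Nmat Xd Fd Hd Φ11 s vs).toBlocks₂₂)⁻¹ *ᵥ
          fun i => Nmat Xd Fd Hd Φ11 s vs (Sum.inr i) (Sum.inl ()))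
        + (Ls ⬝ᵥ vs) - b = γ - b := by rw [hγkey]; rw [hγ]; ring
    have hco : (Lsb ⬝ᵥ ((Nmat Xd Fd Hd Φ11 s vs).toBlocks₂₂)⁻¹ *ᵥ
          (fun i => Nmat Xd Fd Hd Φ11 s vs (Sum.inr i) (Sum.inl ()))) - (Ls ⬝ᵥ vs)
        = -γ := by rw [hγkey]; rw [hγ]; ring
    rw [hc, hco, Nmat_22] at hpsd
    have hMM : (-γ) • -(DsbM Fd Hd s * (DsbM Fd Hd s)ᵀ) = γ • QM Fd Hd s := by
      rw [neg_smul, smul_neg, neg_neg]; rfl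
    rw [hMM] at hpsd
    exact bmat_psd_to (QM Fd Hd s) hQ Lsb (schurV Xd Fd Hd Φ11 s vs) γ b hr0 hb hpsd

end Data

lemma Lsum_eq {n m f g : ℕ} (Fp : Fin f → MvPolynomial (Fin n) ℝ)
    (Gp : Fin g → Fin m → MvPolynomial (Fin n) ℝ) (K : (Fin n → ℝ) → Fin m → ℝ)
    (V : MvPolynomial (Fin n) ℝ) (x : Fin n → ℝ) (A : Matrix (Fin n) (Fin f) ℝ)
    (B : Matrix (Fin n) (Fin g) ℝ) :
    (∑ i, gradEval V x i *
        ((∑ a, A i a * eval x (Fp a)) + ∑ b, B i b * ∑ j, eval x (Gp b j) * K x j))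
      = -(Lvec Fp Gp K V x ⬝ᵥ paramVec A B) := by
  rw [dotProduct, Fintype.sum_sum_type]
  simp only [Lvec, paramVec, Sum.elim_inl, Sum.elim_inr, Fintype.sum_prod_type]
  rw [neg_add]
  have h1 : ∑ i, ∑ a, -(eval x (Fp a)) * gradEval V x i * A i a
      = -∑ i, gradEval V x i * ∑ a, A i a * eval x (Fp a) := by
    rw [← Finset.sum_neg_distrib]
    refine Finset.sum_congr rfl fun i _ => ?_
    rw [Finset.mul_sum, ← Finset.sum_neg_distrib]
    exact Finset.sum_congr rfl fun a _ => by ring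
  have h2 : ∑ i, ∑ b, -(∑ j, eval x (Gp b j) * K x j) * gradEval V x i * B i b
      = -∑ i, gradEval V x i * ∑ b, B i b * ∑ j, eval x (Gp b j) * K x j := by
    rw [← Finset.sum_neg_distrib]
    refine Finset.sum_congr rfl fun i _ => ?_
    rw [Finset.mul_sum, ← Finset.sum_neg_distrib]
    exact Finset.sum_congr rfl fun b _ => by ring
  rw [h1, h2, neg_neg, neg_neg, ← Finset.sum_add_distrib]
  exact Finset.sum_congr rfl fun i _ => mul_add _ _ _




lemma choice_helper {α : Type*} {P : α → ℝ → Prop} {Z : α → Prop}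
    (h : ∀ x, ¬ Z x → ∃ b, P x b) : ∃ β : α → ℝ, ∀ x, ¬ Z x → P x (β x) := by
  have h' : ∀ x, ∃ b, ¬ Z x → P x b := by
    intro x
    by_cases hx : Z x
    · exact ⟨1, fun h2 => absurd hx h2⟩
    · obtain ⟨b, hb⟩ := h x hx
      exact ⟨b, fun _ => hb⟩
  choose β hβ using h'
  exact ⟨β, hβ⟩

/-- **informativity for closed-loop stability.**  Under the full row
rank assumption on `[𝓕; 𝓗]` and nonemptiness of `Σ`, the data are informative for
closed-loop stability with respect to `K` iff there exist a radially unbounded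
`V ∈ 𝒱` and `β : ℝⁿ → ℝ` such that for all `x ≠ 0`: `β(x) > 0` and the matrix
`[[−L_s̄ᵀ(x) N₂₂⁻¹ N₂₁ + L_sᵀ(x) v_s − β(x), (N|N₂₂)^(1/2) L_s̄ᵀ(x)],
  [(N|N₂₂)^(1/2) L_s̄(x), (L_s̄ᵀ(x) N₂₂⁻¹ N₂₁ − L_sᵀ(x) v_s) N₂₂]]`
is positive semidefinite. -/
theorem informativeCL_iff {n m f g T : ℕ} (hn : 0 < n) (hm : 0 < m) (hf : 0 < f)
    (hg : 0 < g) (hT : 0 < T) (Xd : Matrix (Fin n) (Fin T) ℝ)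
    (Fd : Matrix (Fin f) (Fin T) ℝ) (Hd : Matrix (Fin g) (Fin T) ℝ)
    (Φ11 : ℝ) (hΦ : 0 ≤ Φ11) (s : Finset (ParamIdx n f g)) (vs : {i // i ∈ s} → ℝ)
    (Fp : Fin f → MvPolynomial (Fin n) ℝ)
    (hFp0 : ∀ a, eval (0 : Fin n → ℝ) (Fp a) = 0)
    (Gp : Fin g → Fin m → MvPolynomial (Fin n) ℝ)
    (K : (Fin n → ℝ) → Fin m → ℝ) (hK : Continuous K) (hK0 : K 0 = 0)
    (hrank : (Matrix.fromRows Fd Hd).rank = f + g)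
    (hSig : (SigmaSet Xd Fd Hd Φ11 s vs).Nonempty) :
    InformativeCL Xd Fd Hd Φ11 s vs Fp Gp K ↔
      ∃ V : MvPolynomial (Fin n) ℝ, IsLyapCandidate V ∧
        ∃ β : (Fin n → ℝ) → ℝ, ∀ x : Fin n → ℝ, x ≠ 0 →
          0 < β x ∧
          (let N := Nmat Xd Fd Hd Φ11 s vs
           let N22 := N.toBlocks₂₂
           let n21 : {i // i ∈ sᶜ} → ℝ := fun i => N (Sum.inr i) (Sum.inl ())
           let schurN : ℝ := N (Sum.inl ()) (Sum.inl ()) - n21 ⬝ᵥ N22⁻¹ *ᵥ n21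
           let Ls : {i // i ∈ s} → ℝ := fun i => Lvec Fp Gp K V x i.1
           let Lsb : {i // i ∈ sᶜ} → ℝ := fun i => Lvec Fp Gp K V x i.1
           bmatI (-(Lsb ⬝ᵥ N22⁻¹ *ᵥ n21) + Ls ⬝ᵥ vs - β x)
             (Real.sqrt schurN • Lsb)
             ((Lsb ⬝ᵥ N22⁻¹ *ᵥ n21 - Ls ⬝ᵥ vs) • N22)).PosSemidef := by
  constructor
  · rintro ⟨V, hV, hineq⟩
    have hx' : ∀ x : Fin n → ℝ, ¬ (x = 0) → ∃ b : ℝ, 0 < b ∧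
        (bmatI
          (-((fun i : {i // i ∈ sᶜ} => Lvec Fp Gp K V x i.1) ⬝ᵥ
              ((Nmat Xd Fd Hd Φ11 s vs).toBlocks₂₂)⁻¹ *ᵥ
              fun i => Nmat Xd Fd Hd Φ11 s vs (Sum.inr i) (Sum.inl ()))
            + ((fun i : {i // i ∈ s} => Lvec Fp Gp K V x i.1) ⬝ᵥ vs) - b)
          (Real.sqrt (schurV Xd Fd Hd Φ11 s vs) •
            fun i : {i // i ∈ sᶜ} => Lvec Fp Gp K V x i.1)
          (((fun i : {i // i ∈ sᶜ} => Lvec Fp Gp K V x i.1) ⬝ᵥ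
              ((Nmat Xd Fd Hd Φ11 s vs).toBlocks₂₂)⁻¹ *ᵥ
              (fun i => Nmat Xd Fd Hd Φ11 s vs (Sum.inr i) (Sum.inl ()))
            - ((fun i : {i // i ∈ s} => Lvec Fp Gp K V x i.1) ⬝ᵥ vs))
            • (Nmat Xd Fd Hd Φ11 s vs).toBlocks₂₂)).PosSemidef := by
      intro x hx
      refine (bridge Xd Fd Hd Φ11 s vs hrank hSig (Lvec Fp Gp K V x)).mp ?_
      intro AB hAB
      have h0 := hineq x hx AB hAB
      rw [Lsum_eq] at h0
      linarith
    obtain ⟨β, hβ⟩ := choice_helper hx'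
    exact ⟨V, hV, β, fun x hx => hβ x hx⟩
  · rintro ⟨V, hV, β, hβ⟩
    refine ⟨V, hV, ?_⟩
    intro x hx AB hAB
    have h2 := (bridge Xd Fd Hd Φ11 s vs hrank hSig (Lvec Fp Gp K V x)).mpr
      ⟨β x, hβ x hx⟩ AB hAB
    rw [Lsum_eq]
    linarith
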